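/- arXiv:1811.05495 — 8 statements merged into one kernel-verified Lean document; each statement's English description precedes it below -/
import Mathlib

section
/- For all integers d1, d2 ≥ 1 and all p ∈ [0,1], the functions α and β satisfy the system of equations (d1+1)·α(p) = p + d1·p·α(p)·β(p) and (d2+1)·β(p) = p + d2·p·α(p)·β(p). -/
/-!
Write x and y for the numerators of 2 d2 (d1+1) p α and 2 d1 (d2+1) p β, so that x - y = 2p²(d2 - d1).
Clearing denominators, the first equation becomes x² - 2(κ + p²(d2-d1))x + 4κ d2 p² = 0, which holds
because x = κ + p²(d2-d1) - √Δ and (κ + p²(d2-d1))² - Δ = 4κ d2 p². Swapping d1 and d2 leaves κ and Δ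
unchanged and exchanges α and β, so the second equation is the first one for (d2, d1).
-/

/-- κ = (d1+1)(d2+1). -/
noncomputable def frogKappa (d1 d2 : ℕ) : ℝ := ((d1 : ℝ) + 1) * ((d2 : ℝ) + 1)

/-- The discriminant Δ(p) = κ² − 2κ(d1+d2)p² + (d2−d1)²p⁴. -/
noncomputable def frogDelta (d1 d2 : ℕ) (p : ℝ) : ℝ :=
  (frogKappa d1 d2) ^ 2 - 2 * (frogKappa d1 d2) * ((d1 : ℝ) + (d2 : ℝ)) * p ^ 2
    + ((d2 : ℝ) - (d1 : ℝ)) ^ 2 * p ^ 4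

/-- α(p) = (κ + p²(d2−d1) − √Δ(p)) / (2 d2 (d1+1) p) for p ≠ 0, and α(0) = 0. -/
noncomputable def frogAlpha (d1 d2 : ℕ) (p : ℝ) : ℝ :=
  if p = 0 then 0 else
    (frogKappa d1 d2 + p ^ 2 * ((d2 : ℝ) - (d1 : ℝ)) - Real.sqrt (frogDelta d1 d2 p)) /
      (2 * (d2 : ℝ) * ((d1 : ℝ) + 1) * p)

/-- β(p) = (κ + p²(d1−d2) − √Δ(p)) / (2 d1 (d2+1) p) for p ≠ 0, and β(0) = 0. -/
noncomputable def frogBeta (d1 d2 : ℕ) (p : ℝ) : ℝ :=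
  if p = 0 then 0 else
    (frogKappa d1 d2 + p ^ 2 * ((d1 : ℝ) - (d2 : ℝ)) - Real.sqrt (frogDelta d1 d2 p)) /
      (2 * (d1 : ℝ) * ((d2 : ℝ) + 1) * p)

/-- With t = p², Δ = (κ - (d1+d2)t)² - 4 d1 d2 t², and for t ≤ 1 the base satisfies
κ - (d1+d2)t ≥ d1 d2 + 1 ≥ 2√(d1 d2) ≥ 2√(d1 d2) t. -/
theorem frogDelta_nonneg (d1 d2 : ℕ) {p : ℝ} (hp : p ^ 2 ≤ 1) : 0 ≤ frogDelta d1 d2 p := by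
  set a : ℝ := (d1 : ℝ)
  set b : ℝ := (d2 : ℝ)
  have ha : 0 ≤ a := Nat.cast_nonneg d1
  have hb : 0 ≤ b := Nat.cast_nonneg d2
  have hbase : a * b + 1 ≤ frogKappa d1 d2 - (a + b) * p ^ 2 := by
    rw [frogKappa]; nlinarith [mul_nonneg (add_nonneg ha hb) (sub_nonneg.2 hp)]
  have hsq : 4 * (a * b) * (p ^ 2) ^ 2 ≤ (frogKappa d1 d2 - (a + b) * p ^ 2) ^ 2 :=
    calc 4 * (a * b) * (p ^ 2) ^ 2 ≤ 4 * (a * b) := by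
          have : (p ^ 2) ^ 2 ≤ 1 := pow_le_one₀ (sq_nonneg p) hp
          nlinarith [mul_nonneg ha hb]
      _ ≤ (a * b + 1) ^ 2 := by nlinarith [sq_nonneg (a * b - 1)]
      _ ≤ _ := pow_le_pow_left₀ (by positivity) hbase 2
  have hΔ : frogDelta d1 d2 p
      = (frogKappa d1 d2 - (a + b) * p ^ 2) ^ 2 - 4 * (a * b) * (p ^ 2) ^ 2 := by
    unfold frogDelta; ring
  linarith

theorem frogKappa_comm (d1 d2 : ℕ) : frogKappa d2 d1 = frogKappa d1 d2 := by
  unfold frogKappa; ring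

theorem frogDelta_comm (d1 d2 : ℕ) (p : ℝ) : frogDelta d2 d1 p = frogDelta d1 d2 p := by
  unfold frogDelta; rw [frogKappa_comm]; ring

theorem frogAlpha_comm (d1 d2 : ℕ) (p : ℝ) : frogAlpha d2 d1 p = frogBeta d1 d2 p := by
  unfold frogAlpha frogBeta; rw [frogKappa_comm, frogDelta_comm]

theorem frogBeta_comm (d1 d2 : ℕ) (p : ℝ) : frogBeta d2 d1 p = frogAlpha d1 d2 p :=
  (frogAlpha_comm d2 d1 p).symm

theorem frog_numerator_quadratic (d1 d2 : ℕ) (p s : ℝ) (hs : s ^ 2 = frogDelta d1 d2 p) :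
    let c := frogKappa d1 d2 + p ^ 2 * ((d2 : ℝ) - d1)
    (c - s) ^ 2 - 2 * c * (c - s) + 4 * frogKappa d1 d2 * d2 * p ^ 2 = 0 := by
  intro c
  have hc : c ^ 2 - frogDelta d1 d2 p = 4 * frogKappa d1 d2 * d2 * p ^ 2 := by
    simp only [c, frogDelta]; ring
  linear_combination hs - hc

theorem frogAlpha_equation (d1 d2 : ℕ) (hd1 : d1 ≠ 0) (hd2 : d2 ≠ 0) {p : ℝ}
    (hp : p ^ 2 ≤ 1) :
    ((d1 : ℝ) + 1) * frogAlpha d1 d2 p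
      = p + (d1 : ℝ) * p * frogAlpha d1 d2 p * frogBeta d1 d2 p := by
  rcases eq_or_ne p 0 with rfl | hp0
  · simp [frogAlpha]
  have hs := Real.sq_sqrt (frogDelta_nonneg d1 d2 hp)
  have hx := frog_numerator_quadratic d1 d2 p _ hs
  simp only [frogAlpha, frogBeta, if_neg hp0]
  rw [frogKappa] at hx ⊢
  field_simp
  linear_combination (-1) * hx

/-- For all d1, d2 ≥ 1 and p ∈ [0,1], α and β satisfy
(d1+1)α(p) = p + d1 p α(p) β(p) and (d2+1)β(p) = p + d2 p α(p) β(p). -/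
theorem frog_alpha_beta_system (d1 d2 : ℕ) (hd1 : 1 ≤ d1) (hd2 : 1 ≤ d2)
    (p : ℝ) (hp : p ∈ Set.Icc (0 : ℝ) 1) :
    ((d1 : ℝ) + 1) * frogAlpha d1 d2 p
      = p + (d1 : ℝ) * p * frogAlpha d1 d2 p * frogBeta d1 d2 p ∧
    ((d2 : ℝ) + 1) * frogBeta d1 d2 p
      = p + (d2 : ℝ) * p * frogAlpha d1 d2 p * frogBeta d1 d2 p := by
  have hp2 : p ^ 2 ≤ 1 := pow_le_one₀ hp.1 hp.2
  refine ⟨frogAlpha_equation d1 d2 (by omega) (by omega) hp2, ?_⟩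
  have h := frogAlpha_equation d2 d1 (by omega) (by omega) hp2
  rw [frogAlpha_comm d1 d2, frogBeta_comm d1 d2] at h
  linear_combination h
end

section
/- For all integers d1, d2 ≥ 1 and all p ∈ [0,1], one has 0 ≤ α(p) ≤ (d2+1)/(d2(d1+1)) ≤ 1 and 0 ≤ β(p) ≤ (d1+1)/(d1(d2+1)) ≤ 1; moreover α(1) = (d2+1)/(d2(d1+1)), β(1) = (d1+1)/(d1(d2+1)), and in particular α(1)·β(1) = 1/(d1·d2). -/
lemma frogBeta_eq_frogAlpha (d1 d2 : ℕ) (p : ℝ) : frogBeta d1 d2 p = frogAlpha d2 d1 p := by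
  have hκ : frogKappa d2 d1 = frogKappa d1 d2 := by unfold frogKappa; ring
  have hΔ : frogDelta d2 d1 p = frogDelta d1 d2 p := by unfold frogDelta; rw [hκ]; ring
  rw [frogBeta, frogAlpha, hκ, hΔ]

section

variable (a b : ℕ) {p : ℝ}

lemma frogDelta_eq_sq_sub :
    frogDelta a b p = (frogKappa a b + p ^ 2 * ((b : ℝ) - a)) ^ 2
      - 4 * frogKappa a b * b * p ^ 2 := by
  unfold frogDelta; ring

lemma frogDelta_sub_sq :
    frogDelta a b p - (frogKappa a b + p ^ 2 * ((b : ℝ) - a) - 2 * (b + 1) * p) ^ 2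
      = 4 * p * (b + 1) * (1 - p) * (frogKappa a b - ((b : ℝ) - a) * p) := by
  unfold frogDelta frogKappa; ring

lemma sqrt_frogDelta_le (hp : p ^ 2 ≤ 1) :
    √(frogDelta a b p) ≤ frogKappa a b + p ^ 2 * ((b : ℝ) - a) := by
  have hA : (0 : ℝ) ≤ a := a.cast_nonneg
  have hB : (0 : ℝ) ≤ b := b.cast_nonneg
  rw [Real.sqrt_le_iff, frogDelta_eq_sq_sub]
  constructor
  · unfold frogKappa
    nlinarith [mul_nonneg (sq_nonneg p) hB, mul_nonneg (sub_nonneg.2 hp) hA, mul_nonneg hA hB]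
  · have : 0 ≤ frogKappa a b * b * p ^ 2 := by unfold frogKappa; positivity
    linarith

lemma sub_le_sqrt_frogDelta (hp0 : 0 ≤ p) (hp1 : p ≤ 1) :
    frogKappa a b + p ^ 2 * ((b : ℝ) - a) - 2 * (b + 1) * p ≤ √(frogDelta a b p) := by
  have hA : (0 : ℝ) ≤ a := a.cast_nonneg
  have hB : (0 : ℝ) ≤ b := b.cast_nonneg
  have hκ : 0 ≤ frogKappa a b - ((b : ℝ) - a) * p := by
    unfold frogKappa
    nlinarith [mul_nonneg hp0 hA, mul_nonneg (sub_nonneg.2 hp1) hB, mul_nonneg hA hB]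
  have hsq : (frogKappa a b + p ^ 2 * ((b : ℝ) - a) - 2 * (b + 1) * p) ^ 2 ≤ frogDelta a b p := by
    have hgap := frogDelta_sub_sq a b (p := p)
    have hgap_nonneg : 0 ≤ 4 * p * (b + 1) * (1 - p) * (frogKappa a b - ((b : ℝ) - a) * p) := by
      have : 0 ≤ 1 - p := sub_nonneg.2 hp1
      positivity
    linarith
  exact (le_abs_self _).trans (Real.abs_le_sqrt hsq)

lemma frogAlpha_nonneg (hp0 : 0 ≤ p) (hp1 : p ≤ 1) : 0 ≤ frogAlpha a b p := by
  unfold frogAlpha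
  split_ifs
  · rfl
  · have := sqrt_frogDelta_le a b (pow_le_one₀ hp0 hp1)
    exact div_nonneg (by linarith) (by positivity)

lemma frogAlpha_le (hb : 0 < b) (hp0 : 0 ≤ p) (hp1 : p ≤ 1) :
    frogAlpha a b p ≤ ((b : ℝ) + 1) / ((b : ℝ) * ((a : ℝ) + 1)) := by
  unfold frogAlpha
  split_ifs with h0
  · positivity
  · have hpos : 0 < p := lt_of_le_of_ne hp0 (Ne.symm h0)
    rw [div_le_div_iff₀ (by positivity) (by positivity)]
    have := sub_le_sqrt_frogDelta a b hp0 hp1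
    have : 0 ≤ (b : ℝ) * (a + 1) := by positivity
    nlinarith

lemma frogAlpha_one (hab : 1 ≤ a * b) :
    frogAlpha a b 1 = ((b : ℝ) + 1) / ((b : ℝ) * ((a : ℝ) + 1)) := by
  have hAB : (1 : ℝ) ≤ a * b := by exact_mod_cast hab
  have hb : (b : ℝ) ≠ 0 := Nat.cast_ne_zero.2 (by rintro rfl; simp at hab)
  have hΔ : √(frogDelta a b 1) = a * b - 1 := by
    rw [show frogDelta a b 1 = ((a : ℝ) * b - 1) ^ 2 by unfold frogDelta frogKappa; ring,
      Real.sqrt_sq (by linarith)]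
  rw [frogAlpha, if_neg one_ne_zero, hΔ, frogKappa]
  field_simp
  ring

end

lemma add_one_div_mul_add_one_le_one {x y : ℝ} (hx : 1 ≤ x) (hy : 1 ≤ y) :
    (y + 1) / (y * (x + 1)) ≤ 1 := by
  rw [div_le_one (by positivity)]
  nlinarith

/-- For all d1, d2 ≥ 1 and p ∈ [0,1]: 0 ≤ α(p) ≤ (d2+1)/(d2(d1+1)) ≤ 1 and
0 ≤ β(p) ≤ (d1+1)/(d1(d2+1)) ≤ 1; moreover α(1) = (d2+1)/(d2(d1+1)),
β(1) = (d1+1)/(d1(d2+1)), and α(1)β(1) = 1/(d1 d2). -/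
theorem frog_alpha_beta_bounds (d1 d2 : ℕ) (hd1 : 1 ≤ d1) (hd2 : 1 ≤ d2)
    (p : ℝ) (hp : p ∈ Set.Icc (0 : ℝ) 1) :
    (0 ≤ frogAlpha d1 d2 p ∧
      frogAlpha d1 d2 p ≤ ((d2 : ℝ) + 1) / ((d2 : ℝ) * ((d1 : ℝ) + 1)) ∧
      ((d2 : ℝ) + 1) / ((d2 : ℝ) * ((d1 : ℝ) + 1)) ≤ 1) ∧
    (0 ≤ frogBeta d1 d2 p ∧
      frogBeta d1 d2 p ≤ ((d1 : ℝ) + 1) / ((d1 : ℝ) * ((d2 : ℝ) + 1)) ∧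
      ((d1 : ℝ) + 1) / ((d1 : ℝ) * ((d2 : ℝ) + 1)) ≤ 1) ∧
    frogAlpha d1 d2 1 = ((d2 : ℝ) + 1) / ((d2 : ℝ) * ((d1 : ℝ) + 1)) ∧
    frogBeta d1 d2 1 = ((d1 : ℝ) + 1) / ((d1 : ℝ) * ((d2 : ℝ) + 1)) ∧
    frogAlpha d1 d2 1 * frogBeta d1 d2 1 = 1 / ((d1 : ℝ) * (d2 : ℝ)) := by
  obtain ⟨hp0, hp1⟩ := hp
  have hA : (1 : ℝ) ≤ d1 := by exact_mod_cast hd1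
  have hB : (1 : ℝ) ≤ d2 := by exact_mod_cast hd2
  have hα1 := frogAlpha_one d1 d2 (one_le_mul hd1 hd2)
  have hβ1 := frogAlpha_one d2 d1 (one_le_mul hd2 hd1)
  simp only [frogBeta_eq_frogAlpha]
  refine ⟨⟨frogAlpha_nonneg d1 d2 hp0 hp1, frogAlpha_le d1 d2 hd2 hp0 hp1,
      add_one_div_mul_add_one_le_one hA hB⟩,
    ⟨frogAlpha_nonneg d2 d1 hp0 hp1, frogAlpha_le d2 d1 hd1 hp0 hp1,
      add_one_div_mul_add_one_le_one hB hA⟩, hα1, hβ1, ?_⟩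
  rw [hα1, hβ1]
  field_simp
end

section
/- For all integers d1, d2 with 1 ≤ d1 ≤ d2 and all p ∈ [0,1], one has α(p) ≥ β(p). -/
/-- For all 1 ≤ d1 ≤ d2 and p ∈ [0,1], α(p) ≥ β(p). -/
theorem frog_alpha_ge_beta (d1 d2 : ℕ) (hd1 : 1 ≤ d1) (hd12 : d1 ≤ d2)
    (p : ℝ) (hp : p ∈ Set.Icc (0 : ℝ) 1) :
    frogBeta d1 d2 p ≤ frogAlpha d1 d2 p := by
  obtain ⟨hp0, hp1⟩ := hp
  rcases eq_or_lt_of_le hp0 with h0 | h0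
  · simp [frogAlpha, frogBeta, ← h0]
  have hpne : p ≠ 0 := ne_of_gt h0
  have ha : (1 : ℝ) ≤ (d1 : ℝ) := by exact_mod_cast hd1
  have hab : (d1 : ℝ) ≤ (d2 : ℝ) := by exact_mod_cast hd12
  set a := (d1 : ℝ)
  set b := (d2 : ℝ)
  set κ := frogKappa d1 d2 with hκ
  have hκdef : κ = (a + 1) * (b + 1) := rfl
  set S := Real.sqrt (frogDelta d1 d2 p) with hS
  have hΔ : frogDelta d1 d2 p
      = (κ - p ^ 2 * (2 * a * b + a + b)) ^ 2 + 4 * a * b * κ * p ^ 2 * (1 - p ^ 2) := by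
    simp only [frogDelta, frogKappa, hκdef]; ring
  have hS2 : κ - p ^ 2 * (2 * a * b + a + b) ≤ S := by
    have h1 : (κ - p ^ 2 * (2 * a * b + a + b)) ^ 2 ≤ frogDelta d1 d2 p := by
      rw [hΔ]
      nlinarith [mul_nonneg (mul_nonneg (mul_nonneg (mul_nonneg
        (by linarith : (0:ℝ) ≤ 4 * a) (by linarith : (0:ℝ) ≤ b))
        (by nlinarith : (0:ℝ) ≤ κ)) (sq_nonneg p)) (by nlinarith : (0:ℝ) ≤ 1 - p ^ 2)]
    calc κ - p ^ 2 * (2 * a * b + a + b)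
        ≤ |κ - p ^ 2 * (2 * a * b + a + b)| := le_abs_self _
      _ = Real.sqrt ((κ - p ^ 2 * (2 * a * b + a + b)) ^ 2) := (Real.sqrt_sq_eq_abs _).symm
      _ ≤ S := Real.sqrt_le_sqrt h1
  rw [frogAlpha, frogBeta, if_neg hpne, if_neg hpne]
  have h1 : (0:ℝ) < (d1:ℝ) := by exact_mod_cast hd1
  have h2 : (0:ℝ) < (d2:ℝ) := by exact_mod_cast hd1.trans hd12
  rw [div_le_div_iff₀
    (mul_pos (mul_pos (mul_pos (by norm_num : (0:ℝ)<2) h1) (by linarith)) h0)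
    (mul_pos (mul_pos (mul_pos (by norm_num : (0:ℝ)<2) h2) (by linarith)) h0)]
  nlinarith [mul_nonneg (mul_nonneg h0.le (sub_nonneg.2 hab))
      (sub_nonneg.2 hS2), sq_nonneg p, h0.le]
end

section
/- Let q ∈ [0,1] and a, b ∈ [0,1], and let φ(s) = 1 − q(1−s). Suppose K, K*, F, F* : {1,2,3,...} → ℝ satisfy, for every n ≥ 1: K(n) = [1−φ(1−aⁿbⁿ⁻¹)] + Σ_{ℓ=1}^{n−1}[φ(1−a^{ℓ+1}b^ℓ)−φ(1−a^ℓb^ℓ)]·K(n−ℓ) + Σ_{ℓ=1}^{n−1}[φ(1−a^ℓb^ℓ)−φ(1−a^ℓb^{ℓ−1})]·F*(n−ℓ); K*(n) = [1−φ(1−bⁿaⁿ⁻¹)] + Σ_{ℓ=1}^{n−1}[φ(1−b^{ℓ+1}a^ℓ)−φ(1−a^ℓb^ℓ)]·K*(n−ℓ) + Σ_{ℓ=1}^{n−1}[φ(1−a^ℓb^ℓ)−φ(1−b^ℓa^{ℓ−1})]·F(n−ℓ); F(n) = [1−φ(1−aⁿbⁿ)] + Σ_{ℓ=1}^{n−1}[φ(1−a^{ℓ+1}b^ℓ)−φ(1−a^ℓb^ℓ)]·F(n−ℓ)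 + Σ_{ℓ=1}^{n}[φ(1−a^ℓb^ℓ)−φ(1−a^ℓb^{ℓ−1})]·K*(n+1−ℓ); F*(n) = [1−φ(1−bⁿaⁿ)] + Σ_{ℓ=1}^{n−1}[φ(1−b^{ℓ+1}a^ℓ)−φ(1−a^ℓb^ℓ)]·F*(n−ℓ) + Σ_{ℓ=1}^{n}[φ(1−a^ℓb^ℓ)−φ(1−b^ℓa^{ℓ−1})]·K(n+1−ℓ) (where empty sums are 0). Then for every n ≥ 1, F(n+1) = a·b·(1+q(1−a))·(1+q(1−b))·F(n), and consequently F(n) = q·[a·b·(1+q(1−b))]ⁿ·[1+q(1−a)]^{n−1}. -/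
/-- Solution of the recursive system for the path-opening probabilities in the
percolation representation of the frog model with Bernoulli(q) initial configuration:
if K, K*, F, F* satisfy the stated recursions with φ(s) = 1 − q(1−s), then for every
n ≥ 1, F(n+1) = ab(1+q(1−a))(1+q(1−b))F(n) and F(n) = q[ab(1+q(1−b))]ⁿ[1+q(1−a)]^{n−1}. -/
theorem frog_recursion_solution (q a b : ℝ)
    (hq : q ∈ Set.Icc (0 : ℝ) 1) (ha : a ∈ Set.Icc (0 : ℝ) 1) (hb : b ∈ Set.Icc (0 : ℝ) 1)
    (φ : ℝ → ℝ) (hφ : ∀ s, φ s = 1 - q * (1 - s))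
    (K Ks F Fs : ℕ → ℝ)
    (hK : ∀ n : ℕ, 1 ≤ n → K n =
      (1 - φ (1 - a ^ n * b ^ (n - 1)))
      + ∑ ℓ ∈ Finset.Icc 1 (n - 1),
          (φ (1 - a ^ (ℓ + 1) * b ^ ℓ) - φ (1 - a ^ ℓ * b ^ ℓ)) * K (n - ℓ)
      + ∑ ℓ ∈ Finset.Icc 1 (n - 1),
          (φ (1 - a ^ ℓ * b ^ ℓ) - φ (1 - a ^ ℓ * b ^ (ℓ - 1))) * Fs (n - ℓ))
    (hKs : ∀ n : ℕ, 1 ≤ n → Ks n =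
      (1 - φ (1 - b ^ n * a ^ (n - 1)))
      + ∑ ℓ ∈ Finset.Icc 1 (n - 1),
          (φ (1 - b ^ (ℓ + 1) * a ^ ℓ) - φ (1 - a ^ ℓ * b ^ ℓ)) * Ks (n - ℓ)
      + ∑ ℓ ∈ Finset.Icc 1 (n - 1),
          (φ (1 - a ^ ℓ * b ^ ℓ) - φ (1 - b ^ ℓ * a ^ (ℓ - 1))) * F (n - ℓ))
    (hF : ∀ n : ℕ, 1 ≤ n → F n =
      (1 - φ (1 - a ^ n * b ^ n))
      + ∑ ℓ ∈ Finset.Icc 1 (n - 1),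
          (φ (1 - a ^ (ℓ + 1) * b ^ ℓ) - φ (1 - a ^ ℓ * b ^ ℓ)) * F (n - ℓ)
      + ∑ ℓ ∈ Finset.Icc 1 n,
          (φ (1 - a ^ ℓ * b ^ ℓ) - φ (1 - a ^ ℓ * b ^ (ℓ - 1))) * Ks (n + 1 - ℓ))
    (hFs : ∀ n : ℕ, 1 ≤ n → Fs n =
      (1 - φ (1 - b ^ n * a ^ n))
      + ∑ ℓ ∈ Finset.Icc 1 (n - 1),
          (φ (1 - b ^ (ℓ + 1) * a ^ ℓ) - φ (1 - a ^ ℓ * b ^ ℓ)) * Fs (n - ℓ)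
      + ∑ ℓ ∈ Finset.Icc 1 n,
          (φ (1 - a ^ ℓ * b ^ ℓ) - φ (1 - b ^ ℓ * a ^ (ℓ - 1))) * K (n + 1 - ℓ)) :
    ∀ n : ℕ, 1 ≤ n →
      F (n + 1) = a * b * (1 + q * (1 - a)) * (1 + q * (1 - b)) * F n ∧
      F n = q * (a * b * (1 + q * (1 - b))) ^ n * (1 + q * (1 - a)) ^ (n - 1) := by
  obtain ⟨A, hA⟩ : ∃ A : ℝ, A = 1 + q*(1-a) := ⟨_, rfl⟩
  obtain ⟨B, hB⟩ : ∃ B : ℝ, B = 1 + q*(1-b) := ⟨_, rfl⟩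
  have key : ∀ (m : ℕ) (f : ℕ → ℝ), ∑ ℓ ∈ Finset.Icc 1 m, f ℓ = ∑ i ∈ Finset.range m, f (i+1) := by
    intro m f
    rw [← Finset.Ico_add_one_right_eq_Icc, Finset.sum_Ico_eq_sum_range]
    simp [add_comm]
  -- cleaned recursions
  have hK' : ∀ n : ℕ, K (n+1) = q*(a^(n+1)*b^n)
      + (∑ i ∈ Finset.range n, q*(1-a)*((a*b)^(i+1)*K (n-i)))
      + ∑ i ∈ Finset.range n, q*(1-b)*(a^(i+1)*b^i*Fs (n-i)) := by
    intro n
    have h := hK (n+1) (by omega)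
    simp only [key, hφ, Nat.add_sub_cancel, Nat.add_sub_add_right] at h
    rw [h]
    congr 1
    · congr 1
      · ring
      · exact Finset.sum_congr rfl fun i _ => by ring
    · exact Finset.sum_congr rfl fun i _ => by ring
  have hKs' : ∀ n : ℕ, Ks (n+1) = q*(b^(n+1)*a^n)
      + (∑ i ∈ Finset.range n, q*(1-b)*((a*b)^(i+1)*Ks (n-i)))
      + ∑ i ∈ Finset.range n, q*(1-a)*(b^(i+1)*a^i*F (n-i)) := by
    intro n
    have h := hKs (n+1) (by omega)
    simp only [key, hφ, Nat.add_sub_cancel, Nat.add_sub_add_right] at h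
    rw [h]
    congr 1
    · congr 1
      · ring
      · exact Finset.sum_congr rfl fun i _ => by ring
    · exact Finset.sum_congr rfl fun i _ => by ring
  have hF' : ∀ n : ℕ, F (n+1) = q*((a*b)^(n+1))
      + (∑ i ∈ Finset.range n, q*(1-a)*((a*b)^(i+1)*F (n-i)))
      + ∑ i ∈ Finset.range (n+1), q*(1-b)*(a^(i+1)*b^i*Ks (n+1-i)) := by
    intro n
    have h := hF (n+1) (by omega)
    simp only [key, hφ, Nat.add_sub_cancel, Nat.add_sub_add_right] at h
    rw [h]
    congr 1
    · congr 1
      · ring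
      · exact Finset.sum_congr rfl fun i _ => by ring
    · exact Finset.sum_congr rfl fun i _ => by ring
  have hFs' : ∀ n : ℕ, Fs (n+1) = q*((a*b)^(n+1))
      + (∑ i ∈ Finset.range n, q*(1-b)*((a*b)^(i+1)*Fs (n-i)))
      + ∑ i ∈ Finset.range (n+1), q*(1-a)*(b^(i+1)*a^i*K (n+1-i)) := by
    intro n
    have h := hFs (n+1) (by omega)
    simp only [key, hφ, Nat.add_sub_cancel, Nat.add_sub_add_right] at h
    rw [h]
    congr 1
    · congr 1
      · ring
      · exact Finset.sum_congr rfl fun i _ => by ring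
    · exact Finset.sum_congr rfl fun i _ => by ring
  -- peeling lemmas
  have peelK : ∀ n : ℕ, (∑ i ∈ Finset.range (n+1), q*(1-a)*((a*b)^(i+1)*K (n+1-i)))
      = a*b*(∑ i ∈ Finset.range n, q*(1-a)*((a*b)^(i+1)*K (n-i))) + q*(1-a)*(a*b*K (n+1)) := by
    intro n
    rw [Finset.sum_range_succ', Finset.mul_sum]
    congr 1
    · refine Finset.sum_congr rfl fun i _ => ?_
      simp only [show n + 1 - (i + 1) = n - i from by omega]
      ring
    · norm_num
  have peelKs : ∀ n : ℕ, (∑ i ∈ Finset.range (n+1), q*(1-b)*((a*b)^(i+1)*Ks (n+1-i)))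
      = a*b*(∑ i ∈ Finset.range n, q*(1-b)*((a*b)^(i+1)*Ks (n-i))) + q*(1-b)*(a*b*Ks (n+1)) := by
    intro n
    rw [Finset.sum_range_succ', Finset.mul_sum]
    congr 1
    · refine Finset.sum_congr rfl fun i _ => ?_
      simp only [show n + 1 - (i + 1) = n - i from by omega]
      ring
    · norm_num
  have peelF : ∀ n : ℕ, (∑ i ∈ Finset.range (n+1), q*(1-a)*((a*b)^(i+1)*F (n+1-i)))
      = a*b*(∑ i ∈ Finset.range n, q*(1-a)*((a*b)^(i+1)*F (n-i))) + q*(1-a)*(a*b*F (n+1)) := by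
    intro n
    rw [Finset.sum_range_succ', Finset.mul_sum]
    congr 1
    · refine Finset.sum_congr rfl fun i _ => ?_
      simp only [show n + 1 - (i + 1) = n - i from by omega]
      ring
    · norm_num
  have peelFs : ∀ n : ℕ, (∑ i ∈ Finset.range (n+1), q*(1-b)*((a*b)^(i+1)*Fs (n+1-i)))
      = a*b*(∑ i ∈ Finset.range n, q*(1-b)*((a*b)^(i+1)*Fs (n-i))) + q*(1-b)*(a*b*Fs (n+1)) := by
    intro n
    rw [Finset.sum_range_succ', Finset.mul_sum]
    congr 1
    · refine Finset.sum_congr rfl fun i _ => ?_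
      simp only [show n + 1 - (i + 1) = n - i from by omega]
      ring
    · norm_num
  have peelFsK : ∀ n : ℕ, (∑ i ∈ Finset.range (n+1), q*(1-b)*(a^(i+1)*b^i*Fs (n+1-i)))
      = a*b*(∑ i ∈ Finset.range n, q*(1-b)*(a^(i+1)*b^i*Fs (n-i))) + q*(1-b)*(a*Fs (n+1)) := by
    intro n
    rw [Finset.sum_range_succ', Finset.mul_sum]
    congr 1
    · refine Finset.sum_congr rfl fun i _ => ?_
      simp only [show n + 1 - (i + 1) = n - i from by omega]
      ring
    · norm_num
  have peelKF : ∀ n : ℕ, (∑ i ∈ Finset.range (n+1), q*(1-a)*(b^(i+1)*a^i*F (n+1-i)))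
      = a*b*(∑ i ∈ Finset.range n, q*(1-a)*(b^(i+1)*a^i*F (n-i))) + q*(1-a)*(b*F (n+1)) := by
    intro n
    rw [Finset.sum_range_succ', Finset.mul_sum]
    congr 1
    · refine Finset.sum_congr rfl fun i _ => ?_
      simp only [show n + 1 - (i + 1) = n - i from by omega]
      ring
    · norm_num
  have peelKsF : ∀ n : ℕ, (∑ i ∈ Finset.range (n+1+1), q*(1-b)*(a^(i+1)*b^i*Ks (n+1+1-i)))
      = a*b*(∑ i ∈ Finset.range (n+1), q*(1-b)*(a^(i+1)*b^i*Ks (n+1-i))) + q*(1-b)*(a*Ks (n+1+1)) := by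
    intro n
    rw [Finset.sum_range_succ', Finset.mul_sum]
    congr 1
    · refine Finset.sum_congr rfl fun i _ => ?_
      simp only [show n + 1 + 1 - (i + 1) = n + 1 - i from by omega]
      ring
    · norm_num
  have peelKFs : ∀ n : ℕ, (∑ i ∈ Finset.range (n+1+1), q*(1-a)*(b^(i+1)*a^i*K (n+1+1-i)))
      = a*b*(∑ i ∈ Finset.range (n+1), q*(1-a)*(b^(i+1)*a^i*K (n+1-i))) + q*(1-a)*(b*K (n+1+1)) := by
    intro n
    rw [Finset.sum_range_succ', Finset.mul_sum]
    congr 1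
    · refine Finset.sum_congr rfl fun i _ => ?_
      simp only [show n + 1 + 1 - (i + 1) = n + 1 - i from by omega]
      ring
    · norm_num
  -- one-step recursions
  have R1 : ∀ n : ℕ, K (n+2) = a*b*A*K (n+1) + q*(1-b)*a*Fs (n+1) := by
    intro n
    have h2 := hK' (n+1)
    rw [peelK n, peelFsK n] at h2
    rw [hA]
    linear_combination h2 - (a*b) * (hK' n)
  have R2 : ∀ n : ℕ, Ks (n+2) = a*b*B*Ks (n+1) + q*(1-a)*b*F (n+1) := by
    intro n
    have h2 := hKs' (n+1)
    rw [peelKs n, peelKF n] at h2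
    rw [hB]
    linear_combination h2 - (a*b) * (hKs' n)
  have R3 : ∀ n : ℕ, F (n+2) = a*b*A*F (n+1) + q*(1-b)*a*Ks (n+2) := by
    intro n
    have h2 := hF' (n+1)
    rw [peelF n, peelKsF n] at h2
    rw [hA]
    linear_combination h2 - (a*b) * (hF' n)
  have R4 : ∀ n : ℕ, Fs (n+2) = a*b*B*Fs (n+1) + q*(1-a)*b*K (n+2) := by
    intro n
    have h2 := hFs' (n+1)
    rw [peelFs n, peelKFs n] at h2
    rw [hB]
    linear_combination h2 - (a*b) * (hFs' n)
  -- base cases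
  have k1 : K 1 = q * a := by
    have h := hK' 0
    rw [Finset.sum_range_zero, Finset.sum_range_zero] at h
    linear_combination h
  have ks1 : Ks 1 = q * b := by
    have h := hKs' 0
    rw [Finset.sum_range_zero, Finset.sum_range_zero] at h
    linear_combination h
  have f1 : F 1 = q * (a*b) * B := by
    have h := hF' 0
    rw [Finset.sum_range_zero, Finset.sum_range_one] at h
    norm_num at h
    linear_combination h + (q*(1-b)*a) * ks1 - (q*(a*b)) * hB
  have fs1 : Fs 1 = q * (a*b) * A := by
    have h := hFs' 0
    rw [Finset.sum_range_zero, Finset.sum_range_one] at h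
    norm_num at h
    linear_combination h + (q*(1-a)*b) * k1 - (q*(a*b)) * hA
  -- closed forms
  have closed : ∀ n : ℕ,
      K (n+1) = q*(a^(n+1)*b^n)*(A*B)^n ∧
      Ks (n+1) = q*(b^(n+1)*a^n)*(A*B)^n ∧
      F (n+1) = q*((a*b)^(n+1))*(B^(n+1)*A^n) ∧
      Fs (n+1) = q*((a*b)^(n+1))*(A^(n+1)*B^n) := by
    intro n
    induction n with
    | zero =>
      refine ⟨?_, ?_, ?_, ?_⟩
      · rw [k1]; ring
      · rw [ks1]; ring
      · rw [f1]; ring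
      · rw [fs1]; ring
    | succ m ih =>
      obtain ⟨ihK, ihKs, ihF, ihFs⟩ := ih
      have cK : K (m+2) = q*(a^(m+2)*b^(m+1))*(A*B)^(m+1) := by
        linear_combination (R1 m) + (a*b*A)*ihK + (q*(1-b)*a)*ihFs
          - (q*(a^(m+2)*b^(m+1))*(A^(m+1)*B^m))*hB
      have cKs : Ks (m+2) = q*(b^(m+2)*a^(m+1))*(A*B)^(m+1) := by
        linear_combination (R2 m) + (a*b*B)*ihKs + (q*(1-a)*b)*ihF
          - (q*(b^(m+2)*a^(m+1))*(A^m*B^(m+1)))*hA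
      have cF : F (m+2) = q*((a*b)^(m+2))*(B^(m+2)*A^(m+1)) := by
        linear_combination (R3 m) + (a*b*A)*ihF + (q*(1-b)*a)*cKs
          - (q*((a*b)^(m+2))*(A^(m+1)*B^(m+1)))*hB
      have cFs : Fs (m+2) = q*((a*b)^(m+2))*(A^(m+2)*B^(m+1)) := by
        linear_combination (R4 m) + (a*b*B)*ihFs + (q*(1-a)*b)*cK
          - (q*((a*b)^(m+2))*(A^(m+1)*B^(m+1)))*hA
      exact ⟨cK, cKs, cF, cFs⟩
  intro n hn
  obtain ⟨m, rfl⟩ : ∃ m, n = m + 1 := ⟨n - 1, by omega⟩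
  have c1 := (closed m).2.2.1
  have c2 := (closed (m+1)).2.2.1
  constructor
  · rw [← hA, ← hB]
    linear_combination c2 - (a*b*A*B)*c1
  · rw [← hA, ← hB, Nat.add_sub_cancel]
    linear_combination c1
end

section
/- Fix integers d1, d2 ≥ 1 with d1 ≥ 2 or d2 ≥ 2, and let p̄ = (1/2)·√((d1+1)(d2+1)/(d1·d2)). Then p̄ ∈ (0,1] and α(p̄)·β(p̄)·(2−α(p̄))·(2−β(p̄)) ≥ 1/(d1·d2); consequently the unique root p̃ ∈ (0,1) of the function f(p) = α(p)β(p)(2−α(p))(2−β(p)) − 1/(d1·d2) satisfies p̃ ≤ p̄. -/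
set_option maxHeartbeats 1600000

lemma frog_key (d1 d2 : ℕ) (hd1 : 1 ≤ d1) (hd2 : 1 ≤ d2) (p : ℝ)
    (hp0 : 0 < p) (hp1 : p ≤ 1)
    (hσ : ((d1:ℝ)+1)*((d2:ℝ)+1) ≤ (2*(d1:ℝ)*(d2:ℝ)+(d1:ℝ)+(d2:ℝ))*p)
    (hu : 0 ≤ (4*(d1:ℝ)*(d2:ℝ)*(((d1:ℝ)+1)*((d2:ℝ)+1))*p + ((d2:ℝ)-(d1:ℝ))^2*p^2 - (((d1:ℝ)+1)*((d2:ℝ)+1))*(2*(d1:ℝ)*(d2:ℝ)+(d1:ℝ)+(d2:ℝ)))) :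
    (1/((d1:ℝ)*(d2:ℝ)) ≤ frogAlpha d1 d2 p * frogBeta d1 d2 p *
        (2 - frogAlpha d1 d2 p) * (2 - frogBeta d1 d2 p)) ∧
    (0 < (4*(d1:ℝ)*(d2:ℝ)*(((d1:ℝ)+1)*((d2:ℝ)+1))*p + ((d2:ℝ)-(d1:ℝ))^2*p^2 - (((d1:ℝ)+1)*((d2:ℝ)+1))*(2*(d1:ℝ)*(d2:ℝ)+(d1:ℝ)+(d2:ℝ))) →
      1/((d1:ℝ)*(d2:ℝ)) < frogAlpha d1 d2 p * frogBeta d1 d2 p *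
        (2 - frogAlpha d1 d2 p) * (2 - frogBeta d1 d2 p)) := by
  have hD1 : (1:ℝ) ≤ (d1:ℝ) := by exact_mod_cast hd1
  have hD2 : (1:ℝ) ≤ (d2:ℝ) := by exact_mod_cast hd2
  have hp2 : p^2 ≤ 1 := by nlinarith
  have hDel : frogDelta d1 d2 p = (((d1:ℝ)+1)*((d2:ℝ)+1) - ((d1:ℝ)+(d2:ℝ))*p^2)^2 - 4*(d1:ℝ)*(d2:ℝ)*p^4 := by
    unfold frogDelta frogKappa; ring
  have hM : (d1:ℝ)*(d2:ℝ) + 1 ≤ (((d1:ℝ)+1)*((d2:ℝ)+1) - ((d1:ℝ)+(d2:ℝ))*p^2) := by nlinarith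
  have hM0 : (0:ℝ) ≤ (d1:ℝ)*(d2:ℝ) + 1 := by nlinarith
  have hp4 : p^4 ≤ 1 := by nlinarith [sq_nonneg p]
  have hDnn : 0 ≤ frogDelta d1 d2 p := by
    rw [hDel]
    nlinarith [mul_self_le_mul_self hM0 hM, sq_nonneg ((d1:ℝ)*(d2:ℝ) - 1),
      mul_le_mul_of_nonneg_left hp4 (by positivity : (0:ℝ) ≤ 4*(d1:ℝ)*(d2:ℝ))]
  obtain ⟨t, hts, ht0, ht2⟩ : ∃ t : ℝ, Real.sqrt (frogDelta d1 d2 p) = t ∧ 0 ≤ t ∧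
      t^2 = (((d1:ℝ)+1)*((d2:ℝ)+1) - ((d1:ℝ)+(d2:ℝ))*p^2)^2 - 4*(d1:ℝ)*(d2:ℝ)*p^4 :=
    ⟨Real.sqrt (frogDelta d1 d2 p), rfl, Real.sqrt_nonneg _, by rw [Real.sq_sqrt hDnn, hDel]⟩
  have hMt : ((((d1:ℝ)+1)*((d2:ℝ)+1) - ((d1:ℝ)+(d2:ℝ))*p^2) - t) * ((((d1:ℝ)+1)*((d2:ℝ)+1) - ((d1:ℝ)+(d2:ℝ))*p^2) + t) = 4*(d1:ℝ)*(d2:ℝ)*p^4 := by linear_combination -ht2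
  have hdd : (0:ℝ) < (d1:ℝ)*(d2:ℝ) := by nlinarith
  have hMp : 0 < (((d1:ℝ)+1)*((d2:ℝ)+1) - ((d1:ℝ)+(d2:ℝ))*p^2) + t := by linarith
  have hMm : 0 < (((d1:ℝ)+1)*((d2:ℝ)+1) - ((d1:ℝ)+(d2:ℝ))*p^2) - t := by
    have h4 : 0 < ((((d1:ℝ)+1)*((d2:ℝ)+1) - ((d1:ℝ)+(d2:ℝ))*p^2) - t) * ((((d1:ℝ)+1)*((d2:ℝ)+1) - ((d1:ℝ)+(d2:ℝ))*p^2) + t) := by rw [hMt]; positivity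
    rcases mul_pos_iff.mp h4 with ⟨h,_⟩|⟨_,h⟩
    · exact h
    · linarith
  have hpne : p ≠ 0 := hp0.ne'
  have hα : frogAlpha d1 d2 p = ((((d1:ℝ)+1)*((d2:ℝ)+1) + p^2*((d2:ℝ)-(d1:ℝ))) - t) / (2*(d2:ℝ)*((d1:ℝ)+1)*p) := by
    rw [frogAlpha, if_neg hpne, frogKappa, hts]
  have hβ : frogBeta d1 d2 p = ((((d1:ℝ)+1)*((d2:ℝ)+1) + p^2*((d1:ℝ)-(d2:ℝ))) - t) / (2*(d1:ℝ)*((d2:ℝ)+1)*p) := by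
    rw [frogBeta, if_neg hpne, frogKappa, hts]
  have hprod : frogAlpha d1 d2 p * frogBeta d1 d2 p *
      (2 - frogAlpha d1 d2 p) * (2 - frogBeta d1 d2 p) = (((((d1:ℝ)+1)*((d2:ℝ)+1) + p^2*((d2:ℝ)-(d1:ℝ))) - t) * ((((d1:ℝ)+1)*((d2:ℝ)+1) + p^2*((d1:ℝ)-(d2:ℝ))) - t) * (4*(d2:ℝ)*((d1:ℝ)+1)*p - (((d1:ℝ)+1)*((d2:ℝ)+1) + p^2*((d2:ℝ)-(d1:ℝ))) + t) * (4*(d1:ℝ)*((d2:ℝ)+1)*p - (((d1:ℝ)+1)*((d2:ℝ)+1) + p^2*((d1:ℝ)-(d2:ℝ))) + t)) / (16*((d2:ℝ)*((d1:ℝ)+1))^2*((d1:ℝ)*((d2:ℝ)+1))^2*p^4) := by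
    rw [hα, hβ]; field_simp; ring
  have h1 : ((((d1:ℝ)+1)*((d2:ℝ)+1) + p^2*((d2:ℝ)-(d1:ℝ))) - t) * ((((d1:ℝ)+1)*((d2:ℝ)+1) + p^2*((d1:ℝ)-(d2:ℝ))) - t) = 2*(((d1:ℝ)+1)*((d2:ℝ)+1)) * ((((d1:ℝ)+1)*((d2:ℝ)+1) - ((d1:ℝ)+(d2:ℝ))*p^2) - t) := by
    linear_combination ht2
  have h2 : (4*(d2:ℝ)*((d1:ℝ)+1)*p - (((d1:ℝ)+1)*((d2:ℝ)+1) + p^2*((d2:ℝ)-(d1:ℝ))) + t) * (4*(d1:ℝ)*((d2:ℝ)+1)*p - (((d1:ℝ)+1)*((d2:ℝ)+1) + p^2*((d1:ℝ)-(d2:ℝ))) + t) = 2*(((d1:ℝ)+1)*((d2:ℝ)+1)) * ((((d1:ℝ)+1)*((d2:ℝ)+1) - ((d1:ℝ)+(d2:ℝ))*p^2) + t) + (4*p*(4*(d1:ℝ)*(d2:ℝ)*(((d1:ℝ)+1)*((d2:ℝ)+1))*p + ((d2:ℝ)-(d1:ℝ))^2*p^2 - (((d1:ℝ)+1)*((d2:ℝ)+1))*(2*(d1:ℝ)*(d2:ℝ)+(d1:ℝ)+(d2:ℝ)))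 + 4*((2*(d1:ℝ)*(d2:ℝ)+(d1:ℝ)+(d2:ℝ))*p - ((d1:ℝ)+1)*((d2:ℝ)+1))*t) := by
    linear_combination ht2
  have hT : ((((d1:ℝ)+1)*((d2:ℝ)+1) + p^2*((d2:ℝ)-(d1:ℝ))) - t) * ((((d1:ℝ)+1)*((d2:ℝ)+1) + p^2*((d1:ℝ)-(d2:ℝ))) - t) * (4*(d2:ℝ)*((d1:ℝ)+1)*p - (((d1:ℝ)+1)*((d2:ℝ)+1) + p^2*((d2:ℝ)-(d1:ℝ))) + t) * (4*(d1:ℝ)*((d2:ℝ)+1)*p - (((d1:ℝ)+1)*((d2:ℝ)+1) + p^2*((d1:ℝ)-(d2:ℝ))) + t) = (16*(d1:ℝ)*(d2:ℝ)*(((d1:ℝ)+1)*((d2:ℝ)+1))^2*p^4) + 2*(((d1:ℝ)+1)*((d2:ℝ)+1)) * ((((d1:ℝ)+1)*((d2:ℝ)+1) - ((d1:ℝ)+(d2:ℝ))*p^2) - t) * (4*p*(4*(d1:ℝ)*(d2:ℝ)*(((d1:ℝ)+1)*((d2:ℝ)+1))*p + ((d2:ℝ)-(d1:ℝ))^2*p^2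 - (((d1:ℝ)+1)*((d2:ℝ)+1))*(2*(d1:ℝ)*(d2:ℝ)+(d1:ℝ)+(d2:ℝ))) + 4*((2*(d1:ℝ)*(d2:ℝ)+(d1:ℝ)+(d2:ℝ))*p - ((d1:ℝ)+1)*((d2:ℝ)+1))*t) := by
    linear_combination ((4*(d2:ℝ)*((d1:ℝ)+1)*p - (((d1:ℝ)+1)*((d2:ℝ)+1) + p^2*((d2:ℝ)-(d1:ℝ))) + t) * (4*(d1:ℝ)*((d2:ℝ)+1)*p - (((d1:ℝ)+1)*((d2:ℝ)+1) + p^2*((d1:ℝ)-(d2:ℝ))) + t)) * h1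
      + (2*(((d1:ℝ)+1)*((d2:ℝ)+1)) * ((((d1:ℝ)+1)*((d2:ℝ)+1) - ((d1:ℝ)+(d2:ℝ))*p^2) - t)) * h2 + (4*(((d1:ℝ)+1)*((d2:ℝ)+1))^2) * hMt
  have hDen : (0:ℝ) < (16*((d2:ℝ)*((d1:ℝ)+1))^2*((d1:ℝ)*((d2:ℝ)+1))^2*p^4) := by positivity
  have hU0 : 0 ≤ (4*(d1:ℝ)*(d2:ℝ)*(((d1:ℝ)+1)*((d2:ℝ)+1))*p + ((d2:ℝ)-(d1:ℝ))^2*p^2 - (((d1:ℝ)+1)*((d2:ℝ)+1))*(2*(d1:ℝ)*(d2:ℝ)+(d1:ℝ)+(d2:ℝ))) := hu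
  constructor
  · rw [hprod, hT, div_le_div_iff₀ hdd hDen]
    have hG : 0 ≤ (4*p*(4*(d1:ℝ)*(d2:ℝ)*(((d1:ℝ)+1)*((d2:ℝ)+1))*p + ((d2:ℝ)-(d1:ℝ))^2*p^2 - (((d1:ℝ)+1)*((d2:ℝ)+1))*(2*(d1:ℝ)*(d2:ℝ)+(d1:ℝ)+(d2:ℝ))) + 4*((2*(d1:ℝ)*(d2:ℝ)+(d1:ℝ)+(d2:ℝ))*p - ((d1:ℝ)+1)*((d2:ℝ)+1))*t) := by
      have g1 : 0 ≤ 4*p*(4*(d1:ℝ)*(d2:ℝ)*(((d1:ℝ)+1)*((d2:ℝ)+1))*p + ((d2:ℝ)-(d1:ℝ))^2*p^2 - (((d1:ℝ)+1)*((d2:ℝ)+1))*(2*(d1:ℝ)*(d2:ℝ)+(d1:ℝ)+(d2:ℝ))) := by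
        have := mul_nonneg (by linarith : (0:ℝ) ≤ 4*p) hU0
        linarith [this]
      have g2 : 0 ≤ 4*((2*(d1:ℝ)*(d2:ℝ)+(d1:ℝ)+(d2:ℝ))*p - ((d1:ℝ)+1)*((d2:ℝ)+1))*t := by
        have hV0 : (0:ℝ) ≤ ((2*(d1:ℝ)*(d2:ℝ)+(d1:ℝ)+(d2:ℝ))*p - ((d1:ℝ)+1)*((d2:ℝ)+1)) := by linarith
        positivity
      linarith
    have hextra : 0 ≤ 2*(((d1:ℝ)+1)*((d2:ℝ)+1)) * ((((d1:ℝ)+1)*((d2:ℝ)+1) - ((d1:ℝ)+(d2:ℝ))*p^2) - t) * (4*p*(4*(d1:ℝ)*(d2:ℝ)*(((d1:ℝ)+1)*((d2:ℝ)+1))*p + ((d2:ℝ)-(d1:ℝ))^2*p^2 - (((d1:ℝ)+1)*((d2:ℝ)+1))*(2*(d1:ℝ)*(d2:ℝ)+(d1:ℝ)+(d2:ℝ))) + 4*((2*(d1:ℝ)*(d2:ℝ)+(d1:ℝ)+(d2:ℝ))*p - ((d1:ℝ)+1)*((d2:ℝ)+1))*t) :=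
      mul_nonneg (mul_nonneg (by positivity) hMm.le) hG
    calc (1:ℝ) * (16*((d2:ℝ)*((d1:ℝ)+1))^2*((d1:ℝ)*((d2:ℝ)+1))^2*p^4)
        = (16*(d1:ℝ)*(d2:ℝ)*(((d1:ℝ)+1)*((d2:ℝ)+1))^2*p^4) * ((d1:ℝ)*(d2:ℝ)) := by ring
      _ ≤ ((16*(d1:ℝ)*(d2:ℝ)*(((d1:ℝ)+1)*((d2:ℝ)+1))^2*p^4) + 2*(((d1:ℝ)+1)*((d2:ℝ)+1)) * ((((d1:ℝ)+1)*((d2:ℝ)+1) - ((d1:ℝ)+(d2:ℝ))*p^2) - t) * (4*p*(4*(d1:ℝ)*(d2:ℝ)*(((d1:ℝ)+1)*((d2:ℝ)+1))*p + ((d2:ℝ)-(d1:ℝ))^2*p^2 - (((d1:ℝ)+1)*((d2:ℝ)+1))*(2*(d1:ℝ)*(d2:ℝ)+(d1:ℝ)+(d2:ℝ))) + 4*((2*(d1:ℝ)*(d2:ℝ)+(d1:ℝ)+(d2:ℝ))*p - ((d1:ℝ)+1)*((d2:ℝ)+1))*t)) * ((d1:ℝ)*(d2:ℝ)) := by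
          apply mul_le_mul_of_nonneg_right _ hdd.le
          linarith
  · intro hUs
    rw [hprod, hT, div_lt_div_iff₀ hdd hDen]
    have hG : 0 < (4*p*(4*(d1:ℝ)*(d2:ℝ)*(((d1:ℝ)+1)*((d2:ℝ)+1))*p + ((d2:ℝ)-(d1:ℝ))^2*p^2 - (((d1:ℝ)+1)*((d2:ℝ)+1))*(2*(d1:ℝ)*(d2:ℝ)+(d1:ℝ)+(d2:ℝ))) + 4*((2*(d1:ℝ)*(d2:ℝ)+(d1:ℝ)+(d2:ℝ))*p - ((d1:ℝ)+1)*((d2:ℝ)+1))*t) := by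
      have g1 : 0 < 4*p*(4*(d1:ℝ)*(d2:ℝ)*(((d1:ℝ)+1)*((d2:ℝ)+1))*p + ((d2:ℝ)-(d1:ℝ))^2*p^2 - (((d1:ℝ)+1)*((d2:ℝ)+1))*(2*(d1:ℝ)*(d2:ℝ)+(d1:ℝ)+(d2:ℝ))) := by positivity
      have g2 : 0 ≤ 4*((2*(d1:ℝ)*(d2:ℝ)+(d1:ℝ)+(d2:ℝ))*p - ((d1:ℝ)+1)*((d2:ℝ)+1))*t := by
        have hV0 : (0:ℝ) ≤ ((2*(d1:ℝ)*(d2:ℝ)+(d1:ℝ)+(d2:ℝ))*p - ((d1:ℝ)+1)*((d2:ℝ)+1)) := by linarith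
        positivity
      linarith
    have hextra : 0 < 2*(((d1:ℝ)+1)*((d2:ℝ)+1)) * ((((d1:ℝ)+1)*((d2:ℝ)+1) - ((d1:ℝ)+(d2:ℝ))*p^2) - t) * (4*p*(4*(d1:ℝ)*(d2:ℝ)*(((d1:ℝ)+1)*((d2:ℝ)+1))*p + ((d2:ℝ)-(d1:ℝ))^2*p^2 - (((d1:ℝ)+1)*((d2:ℝ)+1))*(2*(d1:ℝ)*(d2:ℝ)+(d1:ℝ)+(d2:ℝ))) + 4*((2*(d1:ℝ)*(d2:ℝ)+(d1:ℝ)+(d2:ℝ))*p - ((d1:ℝ)+1)*((d2:ℝ)+1))*t) :=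
      mul_pos (mul_pos (by positivity) hMm) hG
    calc (1:ℝ) * (16*((d2:ℝ)*((d1:ℝ)+1))^2*((d1:ℝ)*((d2:ℝ)+1))^2*p^4)
        = (16*(d1:ℝ)*(d2:ℝ)*(((d1:ℝ)+1)*((d2:ℝ)+1))^2*p^4) * ((d1:ℝ)*(d2:ℝ)) := by ring
      _ < ((16*(d1:ℝ)*(d2:ℝ)*(((d1:ℝ)+1)*((d2:ℝ)+1))^2*p^4) + 2*(((d1:ℝ)+1)*((d2:ℝ)+1)) * ((((d1:ℝ)+1)*((d2:ℝ)+1) - ((d1:ℝ)+(d2:ℝ))*p^2) - t) * (4*p*(4*(d1:ℝ)*(d2:ℝ)*(((d1:ℝ)+1)*((d2:ℝ)+1))*p + ((d2:ℝ)-(d1:ℝ))^2*p^2 - (((d1:ℝ)+1)*((d2:ℝ)+1))*(2*(d1:ℝ)*(d2:ℝ)+(d1:ℝ)+(d2:ℝ))) + 4*((2*(d1:ℝ)*(d2:ℝ)+(d1:ℝ)+(d2:ℝ))*p - ((d1:ℝ)+1)*((d2:ℝ)+1))*t)) * ((d1:ℝ)*(d2:ℝ)) := by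
          apply mul_lt_mul_of_pos_right _ hdd
          linarith

/-- For d1, d2 ≥ 1 with d1 ≥ 2 or d2 ≥ 2, the value p̄ = (1/2)√((d1+1)(d2+1)/(d1 d2))
lies in (0,1], satisfies α(p̄)β(p̄)(2−α(p̄))(2−β(p̄)) ≥ 1/(d1 d2), and consequently any
root p̃ ∈ (0,1) of f(p) = α(p)β(p)(2−α(p))(2−β(p)) − 1/(d1 d2) satisfies p̃ ≤ p̄. -/
theorem frog_upper_bound_qone (d1 d2 : ℕ) (hd1 : 1 ≤ d1) (hd2 : 1 ≤ d2)
    (hd : 2 ≤ d1 ∨ 2 ≤ d2) (pbar : ℝ)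
    (hpbar : pbar = (1 / 2) * Real.sqrt ((((d1 : ℝ) + 1) * ((d2 : ℝ) + 1)) /
      ((d1 : ℝ) * (d2 : ℝ)))) :
    pbar ∈ Set.Ioc (0 : ℝ) 1 ∧
    1 / ((d1 : ℝ) * (d2 : ℝ)) ≤
      frogAlpha d1 d2 pbar * frogBeta d1 d2 pbar * (2 - frogAlpha d1 d2 pbar) *
        (2 - frogBeta d1 d2 pbar) ∧
    ∀ p ∈ Set.Ioo (0 : ℝ) 1,
      frogAlpha d1 d2 p * frogBeta d1 d2 p * (2 - frogAlpha d1 d2 p) *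
        (2 - frogBeta d1 d2 p) - 1 / ((d1 : ℝ) * (d2 : ℝ)) = 0 →
      p ≤ pbar := by
  have hD1 : (1:ℝ) ≤ (d1:ℝ) := by exact_mod_cast hd1
  have hD2 : (1:ℝ) ≤ (d2:ℝ) := by exact_mod_cast hd2
  have hdd : (0:ℝ) < (d1:ℝ)*(d2:ℝ) := by nlinarith
  have hκ : (0:ℝ) < ((d1:ℝ)+1)*((d2:ℝ)+1) := by nlinarith
  have hr : (0:ℝ) ≤ (((d1:ℝ)+1)*((d2:ℝ)+1)) / ((d1:ℝ)*(d2:ℝ)) := by positivity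
  have hpb0 : 0 < pbar := by
    rw [hpbar]
    have : 0 < (((d1:ℝ)+1)*((d2:ℝ)+1)) / ((d1:ℝ)*(d2:ℝ)) := by positivity
    have := Real.sqrt_pos.mpr this
    linarith
  have hpb2 : 4*(d1:ℝ)*(d2:ℝ)*pbar^2 = ((d1:ℝ)+1)*((d2:ℝ)+1) := by
    rw [hpbar, mul_pow, Real.sq_sqrt hr]
    field_simp
    ring
  have hpb1 : pbar ≤ 1 := by
    nlinarith [sq_nonneg (pbar - 1), sq_nonneg ((d1:ℝ)*(d2:ℝ) - 1), sq_nonneg ((d1:ℝ) - (d2:ℝ))]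
  have hx : (4*(d1:ℝ)*(d2:ℝ)*pbar)^2 = 4*(d1:ℝ)*(d2:ℝ)*(((d1:ℝ)+1)*((d2:ℝ)+1)) := by
    linear_combination (4*(d1:ℝ)*(d2:ℝ)) * hpb2
  have hxσ : 4*(d1:ℝ)*(d2:ℝ)*pbar ≤ 2*(d1:ℝ)*(d2:ℝ)+(d1:ℝ)+(d2:ℝ) := by
    nlinarith [hx, sq_nonneg ((d1:ℝ) - (d2:ℝ)), hpb0]
  have hσbar : ((d1:ℝ)+1)*((d2:ℝ)+1) ≤ (2*(d1:ℝ)*(d2:ℝ)+(d1:ℝ)+(d2:ℝ))*pbar := by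
    nlinarith [mul_le_mul_of_nonneg_right hxσ hpb0.le, hpb2]
  have h7 : ((d2:ℝ)-(d1:ℝ))^2 ≤ 8*(d1:ℝ)*(d2:ℝ)*((d1:ℝ)+(d2:ℝ)) := by
    nlinarith [mul_nonneg (sub_nonneg.mpr hD2) (by positivity : (0:ℝ) ≤ 8*(d1:ℝ)^2),
      mul_nonneg (sub_nonneg.mpr hD1) (by positivity : (0:ℝ) ≤ 8*(d2:ℝ)^2), hdd]
  have haux : (0:ℝ) ≤ ((d2:ℝ)-(d1:ℝ))^2*(8*(d1:ℝ)*(d2:ℝ)*((d1:ℝ)+(d2:ℝ)) - ((d2:ℝ)-(d1:ℝ))^2) :=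
    mul_nonneg (sq_nonneg _) (by linarith [h7])
  have hx4 : 4*(d1:ℝ)*(d2:ℝ)*(2*(d1:ℝ)*(d2:ℝ)+(d1:ℝ)+(d2:ℝ)) - ((d2:ℝ)-(d1:ℝ))^2
      ≤ 4*(d1:ℝ)*(d2:ℝ)*(4*(d1:ℝ)*(d2:ℝ)*pbar) := by
    nlinarith [hx, haux, hpb0, sq_nonneg (4*(d1:ℝ)*(d2:ℝ)*pbar)]
  have h5 : (((d1:ℝ)+1)*((d2:ℝ)+1))*(4*(d1:ℝ)*(d2:ℝ)*(2*(d1:ℝ)*(d2:ℝ)+(d1:ℝ)+(d2:ℝ)) - ((d2:ℝ)-(d1:ℝ))^2)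
      ≤ (((d1:ℝ)+1)*((d2:ℝ)+1))*(4*(d1:ℝ)*(d2:ℝ)*(4*(d1:ℝ)*(d2:ℝ)*pbar)) :=
    mul_le_mul_of_nonneg_left hx4 hκ.le
  have h6 : ((d2:ℝ)-(d1:ℝ))^2*(4*(d1:ℝ)*(d2:ℝ)*pbar^2) = ((d2:ℝ)-(d1:ℝ))^2*(((d1:ℝ)+1)*((d2:ℝ)+1)) := by
    rw [hpb2]
  have hU4 : 0 ≤ (4*(d1:ℝ)*(d2:ℝ)) * (4*(d1:ℝ)*(d2:ℝ)*(((d1:ℝ)+1)*((d2:ℝ)+1))*pbar + ((d2:ℝ)-(d1:ℝ))^2*pbar^2 - (((d1:ℝ)+1)*((d2:ℝ)+1))*(2*(d1:ℝ)*(d2:ℝ)+(d1:ℝ)+(d2:ℝ))) := by nlinarith [h5, h6]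
  have hubar : 0 ≤ (4*(d1:ℝ)*(d2:ℝ)*(((d1:ℝ)+1)*((d2:ℝ)+1))*pbar + ((d2:ℝ)-(d1:ℝ))^2*pbar^2 - (((d1:ℝ)+1)*((d2:ℝ)+1))*(2*(d1:ℝ)*(d2:ℝ)+(d1:ℝ)+(d2:ℝ))) := by
    nlinarith [hU4, mul_pos hdd (mul_pos hdd hdd)]
  refine ⟨⟨hpb0, hpb1⟩, (frog_key d1 d2 hd1 hd2 pbar hpb0 hpb1 hσbar hubar).1, ?_⟩
  intro p hp heq
  by_contra hcon
  push_neg at hcon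
  have hp0 : 0 < p := hp.1
  have hp1 : p ≤ 1 := hp.2.le
  have hσp : ((d1:ℝ)+1)*((d2:ℝ)+1) ≤ (2*(d1:ℝ)*(d2:ℝ)+(d1:ℝ)+(d2:ℝ))*p := by nlinarith [hσbar, hcon]
  have hUp : 0 < (4*(d1:ℝ)*(d2:ℝ)*(((d1:ℝ)+1)*((d2:ℝ)+1))*p + ((d2:ℝ)-(d1:ℝ))^2*p^2 - (((d1:ℝ)+1)*((d2:ℝ)+1))*(2*(d1:ℝ)*(d2:ℝ)+(d1:ℝ)+(d2:ℝ))) := by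
    nlinarith [hubar, mul_pos (mul_pos (mul_pos (show (0:ℝ) < 4 by norm_num) hdd) hκ)
        (sub_pos.mpr hcon),
      mul_le_mul_of_nonneg_left
        (mul_self_le_mul_self hpb0.le hcon.le) (sq_nonneg ((d2:ℝ)-(d1:ℝ)))]
  have := (frog_key d1 d2 hd1 hd2 p hp0 hp1 hσp hUp.le).2 hUp
  linarith
end

section
/- Let d ≥ 2 be an integer and take d1 = d2 = d. Then at p = (d+1)/(2d) one has α(p) = β(p) = 1 − √((d−1)/d), hence α(p)·(2−α(p)) = 1/d and α(p)β(p)(2−α(p))(2−β(p)) = 1/d²; that is, (d+1)/(2d) is the unique root in (0,1) of f(p) = α(p)β(p)(2−α(p))(2−β(p)) − 1/d². -/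
private lemma frog_beta_eq_alpha (d : ℕ) (x : ℝ) : frogBeta d d x = frogAlpha d d x := rfl

private lemma frog_alpha_formula (d : ℕ) (hd : 2 ≤ d) (x : ℝ) (hx : x ≠ 0) :
    frogAlpha d d x
      = (((d:ℝ)+1) - Real.sqrt (((d:ℝ)+1)^2 - 4*(d:ℝ)*x^2)) / (2*(d:ℝ)*x) := by
  have hD : (2:ℝ) ≤ (d:ℝ) := by exact_mod_cast hd
  have hdelta : frogDelta d d x = ((d:ℝ)+1)^2 * (((d:ℝ)+1)^2 - 4*(d:ℝ)*x^2) := by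
    unfold frogDelta frogKappa; ring
  rw [frogAlpha, if_neg hx, hdelta, Real.sqrt_mul (sq_nonneg _),
    Real.sqrt_sq (by linarith : (0:ℝ) ≤ (d:ℝ)+1)]
  unfold frogKappa
  have h1 : ((d:ℝ)+1) ≠ 0 := by linarith
  have h2 : (d:ℝ) ≠ 0 := by linarith
  field_simp
  ring

set_option maxHeartbeats 1000000 in
/-- Homogeneous case d1 = d2 = d ≥ 2: at p = (d+1)/(2d) one has
α(p) = β(p) = 1 − √((d−1)/d), hence α(p)(2−α(p)) = 1/d and
α(p)β(p)(2−α(p))(2−β(p)) = 1/d²; that is, (d+1)/(2d) is the unique root in (0,1)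
of f(p) = α(p)β(p)(2−α(p))(2−β(p)) − 1/d². -/
theorem frog_homogeneous_root (d : ℕ) (hd : 2 ≤ d) (p : ℝ)
    (hp : p = ((d : ℝ) + 1) / (2 * (d : ℝ))) :
    frogAlpha d d p = 1 - Real.sqrt (((d : ℝ) - 1) / (d : ℝ)) ∧
    frogBeta d d p = 1 - Real.sqrt (((d : ℝ) - 1) / (d : ℝ)) ∧
    frogAlpha d d p * (2 - frogAlpha d d p) = 1 / (d : ℝ) ∧
    frogAlpha d d p * frogBeta d d p * (2 - frogAlpha d d p) * (2 - frogBeta d d p)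
      = 1 / (d : ℝ) ^ 2 ∧
    p ∈ Set.Ioo (0 : ℝ) 1 ∧
    ∀ x ∈ Set.Ioo (0 : ℝ) 1,
      frogAlpha d d x * frogBeta d d x * (2 - frogAlpha d d x) * (2 - frogBeta d d x)
        - 1 / (d : ℝ) ^ 2 = 0 → x = p := by
  have hD : (2:ℝ) ≤ (d:ℝ) := by exact_mod_cast hd
  obtain ⟨D, hDdef⟩ : ∃ D : ℝ, (d:ℝ) = D := ⟨_, rfl⟩
  rw [hDdef] at hD hp ⊢
  have hD0 : (0:ℝ) < D := by linarith
  have hD1 : D ≠ 0 := ne_of_gt hD0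
  obtain ⟨t, htdef⟩ : ∃ t : ℝ, Real.sqrt ((D - 1) / D) = t := ⟨_, rfl⟩
  rw [htdef]
  have ht0 : 0 ≤ t := htdef ▸ Real.sqrt_nonneg _
  have ht2 : t ^ 2 = (D - 1) / D := by rw [← htdef]; exact Real.sq_sqrt (div_nonneg (by linarith) (by linarith))
  have ht2' : D * t ^ 2 = D - 1 := by rw [ht2]; field_simp
  have ht1 : t < 1 := by
    by_contra h
    push_neg at h
    nlinarith [mul_le_mul h h (by linarith : (0:ℝ) ≤ 1) ht0]
  have hp0 : p ≠ 0 := by rw [hp]; positivity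
  -- α(p) = 1 - t
  have halphap : frogAlpha d d p = 1 - t := by
    rw [frog_alpha_formula d hd p hp0, hDdef]
    have hE : (D+1)^2 - 4*D*p^2 = (D+1)^2 * ((D-1)/D) := by
      rw [hp]; field_simp; ring
    rw [hE, Real.sqrt_mul (sq_nonneg _), Real.sqrt_sq (by linarith : (0:ℝ) ≤ D+1), htdef]
    rw [hp]
    field_simp
  have hbetap : frogBeta d d p = 1 - t := by rw [frog_beta_eq_alpha]; exact halphap
  refine ⟨halphap, hbetap, ?_, ?_, ?_, ?_⟩
  · rw [halphap, eq_div_iff hD1]; linear_combination (-1 : ℝ) * ht2'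
  · rw [halphap, hbetap]
    have h1 : (1-t) * (2 - (1-t)) = 1/D := by
      rw [eq_div_iff hD1]; linear_combination (-1 : ℝ) * ht2'
    calc (1-t) * (1-t) * (2 - (1-t)) * (2 - (1-t))
        = ((1-t) * (2 - (1-t))) * ((1-t) * (2 - (1-t))) := by ring
      _ = (1/D) * (1/D) := by rw [h1]
      _ = 1 / D^2 := by ring
  · constructor
    · rw [hp]; positivity
    · rw [hp, div_lt_one (by linarith)]; linarith
  · rintro x ⟨hx0, hx1⟩ hfx
    rw [frog_beta_eq_alpha] at hfx
    have hx2 : x^2 < 1 := by nlinarith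
    have hE0 : 0 < (D+1)^2 - 4*D*x^2 := by
      nlinarith [sq_nonneg (D-1), mul_pos hD0 (show (0:ℝ) < 1 - x^2 by linarith)]
    obtain ⟨sE, hsEdef⟩ : ∃ s : ℝ, Real.sqrt ((D+1)^2 - 4*D*x^2) = s := ⟨_, rfl⟩
    have hsE2 : sE ^ 2 = (D+1)^2 - 4*D*x^2 := by rw [← hsEdef]; exact Real.sq_sqrt hE0.le
    have hsE0 : 0 < sE := by rw [← hsEdef]; exact Real.sqrt_pos.mpr hE0
    have hsElt : sE < D + 1 := by nlinarith
    have ha' : frogAlpha d d x = ((D+1) - sE) / (2*D*x) := by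
      rw [frog_alpha_formula d hd x (ne_of_gt hx0), hDdef, hsEdef]
    obtain ⟨a, ha⟩ : ∃ a : ℝ, ((D+1) - sE) / (2*D*x) = a := ⟨_, rfl⟩
    rw [ha' , ha] at hfx
    have hax : a * (2*D*x) = (D+1) - sE := by
      rw [← ha]; field_simp
    have ha0 : 0 < a := by
      rw [← ha]; exact div_pos (by linarith) (by positivity)
    have ha1 : a < 1 := by
      have hprod : (D+1-2*D*x)^2 < sE^2 := by
        rw [hsE2]
        nlinarith [mul_pos (mul_pos (mul_pos hD0 hx0)
          (show (0:ℝ) < 1 - x by linarith)) (show (0:ℝ) < D + 1 by linarith)]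
      have key : D + 1 - 2*D*x < sE := by nlinarith [hprod, hsE0]
      rw [← ha, div_lt_one (by positivity)]
      linarith
    have hgpos : 0 < a * (2 - a) := mul_pos ha0 (by linarith)
    -- g = a(2-a) satisfies g^2 D^2 = 1, g > 0, hence g D = 1
    have hfxD : a * a * (2 - a) * (2 - a) * D^2 = 1 := by
      rw [sub_eq_zero] at hfx
      rw [hfx]
      field_simp
    have hfac : (a * (2-a) * D - 1) * (a * (2-a) * D + 1) = 0 := by
      linear_combination hfxD
    have hgD : a * (2-a) * D = 1 := by
      rcases mul_eq_zero.mp hfac with h | h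
      · linarith
      · exfalso; nlinarith [mul_pos hgpos hD0]
    have hg : a * (2 - a) = 1 / D := by rw [eq_div_iff hD1]; linarith
    -- (1-a)^2 = t^2, both 1-a, t ≥ 0, so a = 1 - t
    have hat : a = 1 - t := by
      have hfac2 : (1 - a - t) * (1 - a + t) * D = 0 := by
        linear_combination (-1:ℝ) * hgD - ht2'
      rcases mul_eq_zero.mp hfac2 with h | h
      · rcases mul_eq_zero.mp h with h' | h'
        · linarith
        · exfalso; nlinarith
      · exact absurd h hD1
    -- recover sE and square
    have hsq : (D+1)^2 - 4*D*x^2 = ((D+1) - 2*D*x*(1-t))^2 := by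
      rw [← hsE2]
      have : sE = (D+1) - 2*D*x*(1-t) := by rw [hat] at hax; linarith [hax]
      rw [this]
    have hkey : 4*D*x*(1-t)*((D+1) - 2*D*x) = 0 := by
      linear_combination hsq + 4*D*x^2*ht2'
    have h1t : (0:ℝ) < 1 - t := by linarith
    have hfin : (D+1) - 2*D*x = 0 := by
      rcases mul_eq_zero.mp hkey with h | h
      · exfalso; nlinarith [mul_pos (mul_pos (mul_pos (show (0:ℝ) < 4 by norm_num) hD0) hx0) h1t]
      · exact h
    rw [hp]
    field_simp
    linarith
end

section
/- Let d ≥ 2 be an integer and let p ∈ (0, 1/d). Then there exist constants C1, C2 > 0 such that for every integer i ≥ 1, Σ_{k=1}^∞ (d+1)·d^{k−1}·(1 − (1 − p^k)^i) ≤ C1 · i^{log d / log(1/p)} + C2. -/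
/-!
The survival factor `1 - (1 - p^(k+1))^i` is at most `1`, and at most `i p^(k+1)` by Bernoulli's
inequality. Cut the series at a `K` with `i p^K ≤ 1` and `(1/p)^K ≤ i/p`: the first `K` terms
contribute at most `(d+1) d^K`, and beyond `K` the terms are dominated by a geometric series of
ratio `dp < 1` whose sum is again `O(d^K)`. Finally `d^K ≤ d · i^α` because `d = (1/p)^α`.
-/

open Finset Real

theorem one_sub_one_sub_pow_le_mul {x : ℝ} (hx : x ≤ 2) (n : ℕ) : 1 - (1 - x) ^ n ≤ n * x := by
  have := one_add_mul_le_pow (a := -x) (by linarith) n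
  rw [← sub_eq_add_neg] at this
  linarith

theorem tsum_le_sum_range_add_of_le_geometric {f : ℕ → ℝ} {c r : ℝ} (K : ℕ) (hf : ∀ k, 0 ≤ f k)
    (hr0 : 0 ≤ r) (hr1 : r < 1) (htail : ∀ k, f (k + K) ≤ c * r ^ k) :
    ∑' k, f k ≤ ∑ k ∈ range K, f k + c / (1 - r) := by
  have hg : Summable fun k => c * r ^ k := (summable_geometric_of_lt_one hr0 hr1).mul_left c
  have hsum : Summable fun k => f (k + K) := hg.of_nonneg_of_le (fun k => hf _) htail
  rw [← ((summable_nat_add_iff K).mp hsum).sum_add_tsum_nat_add K]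
  gcongr
  calc ∑' k, f (k + K) ≤ ∑' k, c * r ^ k := hsum.tsum_le_tsum htail hg
    _ = c / (1 - r) := by rw [tsum_mul_left, tsum_geometric_of_lt_one hr0 hr1, div_eq_mul_inv]

theorem pow_le_rpow_logb_of_pow_le {b t s : ℝ} {K : ℕ} (hb : 1 ≤ b) (ht : 1 < t) (h : t ^ K ≤ s) :
    b ^ K ≤ s ^ logb t b :=
  calc b ^ K = (t ^ logb t b) ^ K := by rw [rpow_logb (by linarith) ht.ne' (by linarith)]
    _ = (t ^ K) ^ logb t b := by
      rw [← rpow_natCast, ← rpow_natCast, ← rpow_mul (by linarith), ← rpow_mul (by linarith),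
        mul_comm]
    _ ≤ s ^ logb t b := rpow_le_rpow (by positivity) h (logb_nonneg ht hb)

theorem tsum_sphere_mul_survival_le (d : ℕ) (hd : 2 ≤ d) {p : ℝ} (hp : 0 ≤ p)
    (hdp : d * p < 1) {i K : ℕ} (hiK : i * p ^ K ≤ 1) :
    ∑' k : ℕ, ((d : ℝ) + 1) * (d : ℝ) ^ k * (1 - (1 - p ^ (k + 1)) ^ i) ≤
      ((d : ℝ) + 1) * (1 + p / (1 - d * p)) * (d : ℝ) ^ K := by
  have hd2 : (2 : ℝ) ≤ d := by exact_mod_cast hd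
  have hp1 : p ≤ 1 := by nlinarith
  have hsurv (k : ℕ) : 0 ≤ 1 - (1 - p ^ (k + 1)) ^ i ∧ 1 - (1 - p ^ (k + 1)) ^ i ≤ 1 := by
    have h0 : 0 ≤ 1 - p ^ (k + 1) := sub_nonneg.mpr (pow_le_one₀ hp hp1)
    have h1 : 1 - p ^ (k + 1) ≤ 1 := sub_le_self _ (pow_nonneg hp _)
    exact ⟨sub_nonneg.mpr (pow_le_one₀ h0 h1), sub_le_self _ (pow_nonneg h0 i)⟩
  have hhead : ∑ k ∈ range K, ((d : ℝ) + 1) * (d : ℝ) ^ k * (1 - (1 - p ^ (k + 1)) ^ i) ≤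
      ((d : ℝ) + 1) * (d : ℝ) ^ K :=
    calc _ ≤ ∑ k ∈ range K, ((d : ℝ) + 1) * (d : ℝ) ^ k :=
          sum_le_sum fun k _ => mul_le_of_le_one_right (by positivity) (hsurv k).2
      _ = ((d : ℝ) + 1) * ((∑ k ∈ range K, d ^ k : ℕ) : ℝ) := by push_cast; rw [mul_sum]
      _ ≤ ((d : ℝ) + 1) * (d : ℝ) ^ K := by
          gcongr
          exact_mod_cast (Nat.geomSum_lt hd fun k hk => mem_range.mp hk).le
  have htail (k : ℕ) : ((d : ℝ) + 1) * (d : ℝ) ^ (k + K) * (1 - (1 - p ^ (k + K + 1)) ^ i) ≤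
      (((d : ℝ) + 1) * p * (d : ℝ) ^ K) * (d * p) ^ k :=
    calc _ ≤ ((d : ℝ) + 1) * (d : ℝ) ^ (k + K) * (i * p ^ (k + K + 1)) := by
          gcongr
          exact one_sub_one_sub_pow_le_mul (by linarith [pow_le_one₀ hp hp1 (n := k + K + 1)]) i
      _ = ((d : ℝ) + 1) * p * (d : ℝ) ^ K * (d * p) ^ k * (i * p ^ K) := by ring
      _ ≤ ((d : ℝ) + 1) * p * (d : ℝ) ^ K * (d * p) ^ k :=
          mul_le_of_le_one_right (by positivity) hiK
  calc _ ≤ _ := tsum_le_sum_range_add_of_le_geometric K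
        (fun k => mul_nonneg (by positivity) (hsurv k).1) (by positivity) hdp htail
    _ ≤ ((d : ℝ) + 1) * (d : ℝ) ^ K + ((d : ℝ) + 1) * p * (d : ℝ) ^ K / (1 - d * p) := by
        gcongr
    _ = _ := by ring

/-- For d ≥ 2 and p ∈ (0, 1/d), there are constants C1, C2 > 0 such that for every
i ≥ 1, Σ_{k=1}^∞ (d+1)d^{k−1}(1 − (1 − pᵏ)ⁱ) ≤ C1 · i^{log d / log(1/p)} + C2. -/
theorem frog_mean_cluster_bound (d : ℕ) (hd : 2 ≤ d) (p : ℝ)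
    (hp : p ∈ Set.Ioo (0 : ℝ) (1 / (d : ℝ))) :
    ∃ C1 : ℝ, 0 < C1 ∧ ∃ C2 : ℝ, 0 < C2 ∧ ∀ i : ℕ, 1 ≤ i →
      (∑' k : ℕ, ((d : ℝ) + 1) * (d : ℝ) ^ k * (1 - (1 - p ^ (k + 1)) ^ i)) ≤
        C1 * (i : ℝ) ^ (Real.log (d : ℝ) / Real.log (1 / p)) + C2 := by
  obtain ⟨hp0, hpd⟩ := hp
  have hd2 : (2 : ℝ) ≤ d := by exact_mod_cast hd
  have hdp : (d : ℝ) * p < 1 := by rwa [lt_div_iff₀ (by linarith), mul_comm] at hpd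
  have ht : 1 < 1 / p := by rw [lt_div_iff₀ hp0]; nlinarith
  set C := ((d : ℝ) + 1) * (1 + p / (1 - d * p))
  have hC : 0 < C := by
    have : 0 < 1 - d * p := sub_pos.mpr hdp
    positivity
  refine ⟨C * d, by positivity, 1, one_pos, fun i hi => ?_⟩
  obtain ⟨n, hn, hin⟩ := exists_nat_pow_near (Nat.one_le_cast.mpr hi) ht
  have hiK : (i : ℝ) * p ^ (n + 1) ≤ 1 := by
    rw [one_div_pow, lt_div_iff₀ (by positivity)] at hin; exact hin.le
  have hKi : (1 / p) ^ (n + 1) ≤ 1 / p * i := by rw [pow_succ, mul_comm]; gcongr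
  rw [log_div_log]
  calc _ ≤ C * (d : ℝ) ^ (n + 1) := tsum_sphere_mul_survival_le d hd hp0.le hdp hiK
    _ ≤ C * (1 / p * i) ^ logb (1 / p) d := by
        gcongr; exact pow_le_rpow_logb_of_pow_le (by linarith) ht hKi
    _ = C * d * (i : ℝ) ^ logb (1 / p) d := by
        rw [mul_rpow (by positivity) (by positivity), rpow_logb (by positivity) ht.ne' (by linarith)]
        ring
    _ ≤ _ := le_add_of_nonneg_right zero_le_one
end

section
/- Let d1, d2 ≥ 1 be integers, let m ≥ 0 be a real number, and set D = max(d1, d2). Then √((d1+1)(d2+1)/((d1(m+1)+1)(d2(m+1)+1))) ≥ (D+1)/(D(m+1)+1), with strict inequality whenever d1 ≠ d2 and m > 0. -/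
lemma frog_aux_le (a b m : ℝ) (ha : 0 ≤ a) (hab : a ≤ b) (hm : 0 ≤ m) :
    (b + 1) / (b * (m + 1) + 1) ≤
      Real.sqrt (((a + 1) * (b + 1)) / ((a * (m + 1) + 1) * (b * (m + 1) + 1))) := by
  have hb : 0 ≤ b := ha.trans hab
  have hda : 0 < a * (m + 1) + 1 := by nlinarith
  have hdb : 0 < b * (m + 1) + 1 := by nlinarith
  rw [Real.le_sqrt (by positivity) (by positivity)]
  rw [div_pow, div_le_div_iff₀ (by positivity) (by positivity)]
  nlinarith [mul_nonneg (sub_nonneg.2 hab) hm, mul_pos hdb hdb,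
    mul_nonneg (mul_nonneg (sub_nonneg.2 hab) hm) (mul_pos hdb (by nlinarith : (0:ℝ) < b + 1)).le]

lemma frog_aux_lt (a b m : ℝ) (ha : 0 ≤ a) (hab : a < b) (hm : 0 < m) :
    (b + 1) / (b * (m + 1) + 1) <
      Real.sqrt (((a + 1) * (b + 1)) / ((a * (m + 1) + 1) * (b * (m + 1) + 1))) := by
  have hb : 0 ≤ b := ha.trans hab.le
  have hda : 0 < a * (m + 1) + 1 := by nlinarith
  have hdb : 0 < b * (m + 1) + 1 := by nlinarith
  rw [show (b+1)/(b*(m+1)+1) = Real.sqrt (((b+1)/(b*(m+1)+1))^2) from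
    (Real.sqrt_sq (by positivity)).symm]
  apply Real.sqrt_lt_sqrt (by positivity)
  rw [div_pow, div_lt_div_iff₀ (by positivity) (by positivity)]
  nlinarith [mul_pos (mul_pos (sub_pos.2 hab) hm) (mul_pos hdb (by nlinarith : (0:ℝ) < b + 1))]

/-- For d1, d2 ≥ 1, m ≥ 0 and D = max(d1, d2):
√((d1+1)(d2+1)/((d1(m+1)+1)(d2(m+1)+1))) ≥ (D+1)/(D(m+1)+1), with strict inequality
whenever d1 ≠ d2 and m > 0. -/
theorem frog_biregular_lower_bound_beats_general (d1 d2 : ℕ) (hd1 : 1 ≤ d1) (hd2 : 1 ≤ d2)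
    (m : ℝ) (hm : 0 ≤ m) (D : ℕ) (hD : D = max d1 d2) :
    ((D : ℝ) + 1) / ((D : ℝ) * (m + 1) + 1) ≤
      Real.sqrt ((((d1 : ℝ) + 1) * ((d2 : ℝ) + 1)) /
        (((d1 : ℝ) * (m + 1) + 1) * ((d2 : ℝ) * (m + 1) + 1))) ∧
    (d1 ≠ d2 → 0 < m →
      ((D : ℝ) + 1) / ((D : ℝ) * (m + 1) + 1) <
        Real.sqrt ((((d1 : ℝ) + 1) * ((d2 : ℝ) + 1)) /
          (((d1 : ℝ) * (m + 1) + 1) * ((d2 : ℝ) * (m + 1) + 1)))) := by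
  rcases le_total d1 d2 with h | h
  · have hDv : (D : ℝ) = (d2 : ℝ) := by rw [hD, max_eq_right h]
    constructor
    · rw [hDv]
      exact frog_aux_le _ _ _ (by positivity) (by exact_mod_cast h) hm
    · intro hne hmpos
      rw [hDv]
      exact frog_aux_lt _ _ _ (by positivity)
        (by exact_mod_cast lt_of_le_of_ne h hne) hmpos
  · have hDv : (D : ℝ) = (d1 : ℝ) := by rw [hD, max_eq_left h]
    have hcomm : (((d1 : ℝ) + 1) * ((d2 : ℝ) + 1)) /
        (((d1 : ℝ) * (m + 1) + 1) * ((d2 : ℝ) * (m + 1) + 1)) =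
        (((d2 : ℝ) + 1) * ((d1 : ℝ) + 1)) /
        (((d2 : ℝ) * (m + 1) + 1) * ((d1 : ℝ) * (m + 1) + 1)) := by ring
    constructor
    · rw [hDv, hcomm]
      exact frog_aux_le _ _ _ (by positivity) (by exact_mod_cast h) hm
    · intro hne hmpos
      rw [hDv, hcomm]
      exact frog_aux_lt _ _ _ (by positivity)
        (by exact_mod_cast lt_of_le_of_ne h (Ne.symm hne)) hmpos
end
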